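/- The set {1/7, 5/7} is the unique optimal set of two-means for P, and the second quantization error is V_2 = 69/3577. -/

import Mathlib

/-
By invariance, `P` restricted to `[0, 1/4]` is `¼ · (S₁)₊P`, `P` restricted to `[1/2, 5/8]` is
`⅜ · (S₂)₊P`, and the gaps `(1/4, 1/2)`, `(5/8, 3/4)` are `P`-null. So the distortion of a pair,
`D(a, b) = ∫ min((x - a)², (x - b)²) dP`, satisfies
`D(a, b) = D(4a, 4b) / 64 + 3 D(8a - 4, 8b - 4) / 512 + ∫_{[3/4, 1]} min((x - a)², (x - b)²) dP`,
and the moments `4/7`, `208/511` give `∫ (x - a)² dP = 288/3577 + (a - 4/7)²`.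

Let `V = 69/3577` and `a < b`. If `1/2 ≤ a + b ≤ 1`, the Voronoi cells are `[0, 1/4]` and
`[1/2, 1]`, and `D(a, b) = V + (a - 1/7)²/4 + 3 (b - 5/7)²/4`. If `a + b > 1`, expanding
`D(8a - 4, 8b - 4)` once more bounds `D(a, b)` strictly above `V`. If `a + b < 1/2`, all of
`[1/2, 1]` goes to `b` and `[0, 1/4]` carries a scaled copy of `P`, so
`D(a, b) > 63 V / 64 + D(4a, 4b) / 64 ≥ 63 V / 64 + V₂ / 64` when `b` is far from `5/7`, and
`D(a, b) > V` otherwise. Together with `V₂ ≤ V` this self-referential bound forces `V₂ = V`.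
-/

open MeasureTheory

noncomputable section

/-- The contractive similarity `S j x = x / 2^(j+1) + 1 - 1/2^(j-1)` (used for `j ≥ 1`). -/
def S (j : ℕ) (x : ℝ) : ℝ := x / 2 ^ (j + 1) + 1 - 1 / 2 ^ (j - 1)

/-- The similarity ratio `s j = 1/2^(j+1)`. -/
def s (j : ℕ) : ℝ := 1 / 2 ^ (j + 1)

/-- The probability vector: `p 1 = 1/4`, `p j = 3/2^(j+1)` for `j ≥ 2`. -/
def p (j : ℕ) : ℝ := if j = 1 then 1 / 4 else 3 / 2 ^ (j + 1)

/-- `Sw ω = S_{ω_1} ∘ ⋯ ∘ S_{ω_k}`. -/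
def Sw (ω : List ℕ) : ℝ → ℝ := ω.foldr (fun j f => S j ∘ f) id

/-- `pw ω = p_{ω_1} ⋯ p_{ω_k}`. -/
def pw (ω : List ℕ) : ℝ := (ω.map p).prod

/-- `sw ω = s_{ω_1} ⋯ s_{ω_k}`. -/
def sw (ω : List ℕ) : ℝ := (ω.map s).prod

/-- The basic interval `J_ω = S_ω([0,1])`. -/
def Jw (ω : List ℕ) : Set ℝ := Sw ω '' Set.Icc 0 1

/-- The last letter of a word (junk value `0` for the empty word). -/
def wlast (ω : List ℕ) : ℕ := ω.getLastD 0

/-- `wext ω j = ω^-(ω_k + j)`: the word `ω` with its last letter increased by `j`. -/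
def wext (ω : List ℕ) (j : ℕ) : List ℕ := ω.dropLast ++ [wlast ω + j]

/-- `J_{(ω,∞)} = ⋃_{j=1}^∞ J_{ω^-(ω_k+j)}`. -/
def Jinf (ω : List ℕ) : Set ℝ := ⋃ j : ℕ, Jw (wext ω (j + 1))

/-- `a(ω) = S_ω(4/7)`. -/
def aw (ω : List ℕ) : ℝ := Sw ω (4 / 7)

/-- `a(ω,∞) = S_{ω^-(ω_k+1)}(4/7) + (8/7) s_{ω^-(ω_k+1)}`. -/
def ainf (ω : List ℕ) : ℝ := Sw (wext ω 1) (4 / 7) + (8 / 7) * sw (wext ω 1)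

/-- A (nonempty) word over the alphabet `{1, 2, 3, …}`. -/
def IsWord (ω : List ℕ) : Prop := ω ≠ [] ∧ ∀ i ∈ ω, 1 ≤ i

/-- The invariance relation `P(A) = ∑_{j=1}^∞ p_j P(S_j⁻¹ A)`. -/
def Invariant (P : Measure ℝ) : Prop :=
  ∀ A : Set ℝ, MeasurableSet A →
    P A = ∑' j : ℕ, ENNReal.ofReal (p (j + 1)) * P (S (j + 1) ⁻¹' A)

/-- The distortion error `∫ min_{a ∈ α} (x-a)² dP` of a set `α ⊆ ℝ`. -/
def distortion (P : Measure ℝ) (α : Set ℝ) : ℝ :=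
  ∫ x, (⨅ a : α, (x - (a : ℝ)) ^ 2) ∂P

/-- The `n`-th quantization error for `P`. -/
def quantErr (P : Measure ℝ) (n : ℕ) : ℝ :=
  sInf {r : ℝ | ∃ α : Set ℝ, 1 ≤ α.ncard ∧ α.ncard ≤ n ∧ r = distortion P α}

/-- `α` is an optimal set of `n`-means for `P`. -/
def IsOptimal (P : Measure ℝ) (n : ℕ) (α : Set ℝ) : Prop :=
  1 ≤ α.ncard ∧ α.ncard ≤ n ∧ distortion P α = quantErr P n

/-- `E(a(ω)) = ∫_{J_ω} (x - a(ω))² dP`. -/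
def Ea (P : Measure ℝ) (ω : List ℕ) : ℝ := ∫ x in Jw ω, (x - aw ω) ^ 2 ∂P

/-- `E(a(ω,∞)) = ∫_{J_{(ω,∞)}} (x - a(ω,∞))² dP`. -/
def Eainf (P : Measure ℝ) (ω : List ℕ) : ℝ := ∫ x in Jinf ω, (x - ainf ω) ^ 2 ∂P

/-- The Voronoi region `M(a|α)`. -/
def voronoi (α : Set ℝ) (a : ℝ) : Set ℝ := {x : ℝ | ∀ b ∈ α, |x - a| ≤ |x - b|}

open Set

lemma distortion_pair (P : Measure ℝ) (a b : ℝ) :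
    distortion P {a, b} = ∫ x, min ((x - a) ^ 2) ((x - b) ^ 2) ∂P := by
  unfold distortion
  congr 1 with x
  rw [← sInf_image' (f := fun c : ℝ => (x - c) ^ 2), image_pair, csInf_pair]

lemma distortion_singleton (P : Measure ℝ) (a : ℝ) :
    distortion P {a} = ∫ x, (x - a) ^ 2 ∂P := by
  unfold distortion
  congr 1 with x
  rw [← sInf_image' (f := fun c : ℝ => (x - c) ^ 2), image_singleton, csInf_singleton]

lemma distortion_nonneg (P : Measure ℝ) (α : Set ℝ) : 0 ≤ distortion P α :=
  integral_nonneg fun _ => Real.iInf_nonneg fun _ => sq_nonneg _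

lemma quantErr_le_distortion {P : Measure ℝ} {n : ℕ} {α : Set ℝ} (h₁ : 1 ≤ α.ncard)
    (h₂ : α.ncard ≤ n) : quantErr P n ≤ distortion P α :=
  csInf_le ⟨0, by rintro r ⟨β, -, -, rfl⟩; exact distortion_nonneg P β⟩ ⟨α, h₁, h₂, rfl⟩

lemma le_quantErr {P : Measure ℝ} {n : ℕ} {r : ℝ} (hn : 1 ≤ n)
    (h : ∀ α : Set ℝ, 1 ≤ α.ncard → α.ncard ≤ n → r ≤ distortion P α) : r ≤ quantErr P n :=
  le_csInf ⟨_, {0}, by simp, by simpa, rfl⟩ (by rintro _ ⟨α, h₁, h₂, rfl⟩; exact h α h₁ h₂)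

lemma quantErr_two_le_distortion_pair {P : Measure ℝ} {a b : ℝ} (hab : a ≠ b) :
    quantErr P 2 ≤ distortion P {a, b} :=
  quantErr_le_distortion (by rw [ncard_pair hab]; norm_num) (ncard_pair hab).le

lemma min_sq_sub_eq_left {a b x : ℝ} (hab : a ≤ b) (hx : 2 * x ≤ a + b) :
    min ((x - a) ^ 2) ((x - b) ^ 2) = (x - a) ^ 2 :=
  min_eq_left (by nlinarith)

lemma min_sq_sub_eq_right {a b x : ℝ} (hab : a ≤ b) (hx : a + b ≤ 2 * x) :
    min ((x - a) ^ 2) ((x - b) ^ 2) = (x - b) ^ 2 :=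
  min_eq_right (by nlinarith)

lemma continuous_S (j : ℕ) : Continuous (S j) := by
  unfold S; fun_prop

lemma S_succ_eq (j : ℕ) (x : ℝ) : S (j + 1) x = (x / 4 - 1) * (1 / 2) ^ j + 1 := by
  simp only [S, Nat.add_sub_cancel, pow_succ, one_div_pow]
  field_simp
  ring

lemma S_one_mem {x : ℝ} (hx : x ∈ Icc (0 : ℝ) 1) : S 1 x ∈ Icc (0 : ℝ) (1 / 4) := by
  simp only [S, mem_Icc] at hx ⊢; constructor <;> linarith [hx.1, hx.2]

lemma S_two_mem {x : ℝ} (hx : x ∈ Icc (0 : ℝ) 1) : S 2 x ∈ Icc (1 / 2 : ℝ) (5 / 8) := by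
  simp only [S, mem_Icc] at hx ⊢; norm_num; constructor <;> linarith [hx.1, hx.2]

lemma S_mem_of_three_le {k : ℕ} (hk : 3 ≤ k) {x : ℝ} (hx : x ∈ Icc (0 : ℝ) 1) :
    S k x ∈ Icc (3 / 4 : ℝ) 1 := by
  obtain ⟨j, rfl⟩ := Nat.exists_eq_add_of_le' hk
  have ht : (1 / 2 : ℝ) ^ (j + 2) ≤ 1 / 4 := by
    rw [pow_add]; norm_num; exact pow_le_one₀ (by norm_num) (by norm_num)
  have ht0 : (0 : ℝ) ≤ (1 / 2) ^ (j + 2) := by positivity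
  rw [S_succ_eq]
  constructor <;> nlinarith [hx.1, hx.2]

lemma p_succ_nonneg (j : ℕ) : 0 ≤ p (j + 1) := by
  unfold p; split <;> positivity

lemma hasSum_p_mul_pow {r : ℝ} (hr : |r| < 2) :
    HasSum (fun j => p (j + 1) * r ^ j) (1 / 4 + 3 * r / (4 * (2 - r))) := by
  have hr2 : |r / 2| < 1 := by rw [abs_div, abs_two]; linarith
  have hgeom := (hasSum_geometric_of_abs_lt_one hr2).mul_left (3 * r / 8)
  have hterm : (fun j => 3 * r / 8 * (r / 2) ^ j) = fun j => p (j + 1 + 1) * r ^ (j + 1) := by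
    funext j
    rw [p, if_neg (by omega), div_pow, pow_succ, pow_add, pow_succ]
    field_simp
    ring
  have hsum : 3 * r / 8 * (1 - r / 2)⁻¹ = 3 * r / (4 * (2 - r)) := by
    have : (2 : ℝ) - r ≠ 0 := by linarith [le_abs_self r]
    field_simp
    ring
  rw [hterm, hsum] at hgeom
  have h := HasSum.zero_add (f := fun j => p (j + 1) * r ^ j) hgeom
  rwa [p, if_pos rfl, pow_zero, mul_one] at h

section SupportedOnUnitInterval

variable {P : Measure ℝ}

lemma setIntegral_Icc_eq_add_of_measure_Ioo_eq_zero {a b c d : ℝ} (hab : a ≤ b) (hbc : b < c)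
    (hcd : c ≤ d) (hgap : P (Ioo b c) = 0) {f : ℝ → ℝ} (hf : Integrable f P) :
    ∫ x in Icc a d, f x ∂P = ∫ x in Icc a b, f x ∂P + ∫ x in Icc c d, f x ∂P := by
  have hae : (Icc a b ∪ Icc c d : Set ℝ) =ᵐ[P] Icc a d := by
    refine ae_eq_set.mpr ⟨?_, measure_mono_null (fun x ⟨⟨hax, hxd⟩, hx⟩ => ?_) hgap⟩
    · rw [sdiff_eq_empty.mpr (union_subset (Icc_subset_Icc le_rfl (by linarith))
        (Icc_subset_Icc (by linarith) le_rfl)), measure_empty]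
    · simp only [mem_union, mem_Icc, not_or, not_and_or, not_le] at hx
      exact ⟨hx.1.resolve_left (by linarith), hx.2.resolve_right (by linarith)⟩
  rw [← setIntegral_congr_set hae, setIntegral_union ?_ measurableSet_Icc hf.integrableOn
    hf.integrableOn]
  exact Set.disjoint_left.mpr fun x hx hx' => by linarith [hx.2, hx'.1]

variable [IsProbabilityMeasure P]

lemma ae_mem_Icc (hsupp : P (Icc 0 1) = 1) : ∀ᵐ x ∂P, x ∈ Icc (0 : ℝ) 1 :=
  (prob_compl_eq_zero_iff measurableSet_Icc).mpr hsupp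

lemma integrable_of_continuous (hsupp : P (Icc 0 1) = 1) {f : ℝ → ℝ} (hf : Continuous f) :
    Integrable f P := by
  obtain ⟨C, hC⟩ := (isCompact_Icc (a := (0 : ℝ)) (b := 1)).exists_bound_of_continuousOn
    hf.continuousOn
  refine ⟨hf.aestronglyMeasurable, HasFiniteIntegral.of_bounded (C := C) ?_⟩
  filter_upwards [ae_mem_Icc hsupp] with x hx using hC x hx

lemma integral_quadratic (hsupp : P (Icc 0 1) = 1) (a b c : ℝ) :
    ∫ x, (a * x ^ 2 + b * x + c) ∂P = a * ∫ x, x ^ 2 ∂P + b * ∫ x, x ∂P + c := by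
  rw [integral_add (integrable_of_continuous hsupp (by fun_prop)) (integrable_const _),
    integral_add (integrable_of_continuous hsupp (by fun_prop))
      (integrable_of_continuous hsupp (by fun_prop)),
    integral_const_mul, integral_const_mul]
  simp

lemma measure_preimage_S_eq_zero (hsupp : P (Icc 0 1) = 1) {k : ℕ}
    {A : Set ℝ} (h : ∀ x ∈ Icc (0 : ℝ) 1, S k x ∉ A) : P (S k ⁻¹' A) = 0 :=
  measure_mono_null (fun x hx hx' => h x hx' hx) (ae_mem_Icc hsupp)

lemma min_le_distortion_pair (hsupp : P (Icc 0 1) = 1) {a b : ℝ}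
    (ha : a ≤ 0) (hb : 1 ≤ b) : min (a ^ 2) ((b - 1) ^ 2) ≤ distortion P {a, b} := by
  calc min (a ^ 2) ((b - 1) ^ 2) = ∫ _, min (a ^ 2) ((b - 1) ^ 2) ∂P := by simp
    _ ≤ _ := by
      rw [distortion_pair]
      refine integral_mono_ae (integrable_const _) (integrable_of_continuous hsupp (by fun_prop)) ?_
      filter_upwards [ae_mem_Icc hsupp] with x hx
      exact min_le_min (by nlinarith [hx.1]) (by nlinarith [hx.2])

end SupportedOnUnitInterval

namespace Invariant

variable {P : Measure ℝ}

lemma eq_sum_map (hinv : Invariant P) :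
    P = Measure.sum fun j => ENNReal.ofReal (p (j + 1)) • P.map (S (j + 1)) := by
  ext A hA
  rw [Measure.sum_apply _ hA, hinv A hA]
  congr 1 with j
  rw [Measure.smul_apply, Measure.map_apply (continuous_S _).measurable hA, smul_eq_mul]

variable [IsProbabilityMeasure P]

lemma hasSum_integral (hsupp : P (Icc 0 1) = 1) (hinv : Invariant P) {f : ℝ → ℝ}
    (hf : Continuous f) :
    HasSum (fun j => p (j + 1) * ∫ x, f (S (j + 1) x) ∂P) (∫ x, f x ∂P) := by
  have hint := integrable_of_continuous hsupp hf
  rw [eq_sum_map hinv] at hint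
  have h := hasSum_integral_measure hint
  rw [← eq_sum_map hinv] at h
  refine h.congr_fun fun j => ?_
  rw [integral_smul_measure, integral_map (continuous_S _).aemeasurable hf.aestronglyMeasurable,
    ENNReal.toReal_ofReal (p_succ_nonneg j), smul_eq_mul]

lemma integral_id_eq (hsupp : P (Icc 0 1) = 1) (hinv : Invariant P) :
    ∫ x, x ∂P = 4 / 7 := by
  set m := ∫ x, x ∂P
  have hterm : ∀ j, ∫ x, S (j + 1) x ∂P = (m / 4 - 1) * (1 / 2) ^ j + 1 := by
    intro j
    calc ∫ x, S (j + 1) x ∂P = ∫ x, (0 * x ^ 2 + (1 / 2) ^ j / 4 * x + (1 - (1 / 2) ^ j)) ∂P := by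
          congr 1 with x; rw [S_succ_eq]; ring
      _ = _ := by rw [integral_quadratic hsupp]; ring
  have hsum := hasSum_integral hsupp hinv (f := fun x => x) continuous_id
  simp only [hterm] at hsum
  have hrhs := (((hasSum_p_mul_pow (r := 1 / 2) (by norm_num)).mul_left (m / 4 - 1)).add
    (hasSum_p_mul_pow (r := 1) (by norm_num))).congr_fun
    (g := fun j => p (j + 1) * ((m / 4 - 1) * (1 / 2) ^ j + 1)) fun j => by ring
  have := hsum.unique hrhs
  norm_num at this
  linarith

lemma integral_sq_eq (hsupp : P (Icc 0 1) = 1) (hinv : Invariant P) :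
    ∫ x, x ^ 2 ∂P = 208 / 511 := by
  set m := ∫ x, x ^ 2 ∂P
  have hterm : ∀ j, ∫ x, S (j + 1) x ^ 2 ∂P
      = (m / 16 + 5 / 7) * (1 / 4) ^ j - 12 / 7 * (1 / 2) ^ j + 1 := by
    intro j
    calc ∫ x, S (j + 1) x ^ 2 ∂P = ∫ x, ((1 / 4) ^ j / 16 * x ^ 2
          + ((1 / 2) ^ j / 2 - (1 / 4) ^ j / 2) * x + (1 - (1 / 2) ^ j) ^ 2) ∂P := by
          congr 1 with x; rw [S_succ_eq, show (1 / 4 : ℝ) = (1 / 2) ^ 2 by norm_num, ← pow_mul,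
            mul_comm 2 j, pow_mul]; ring
      _ = _ := by
          rw [integral_quadratic hsupp, integral_id_eq hsupp hinv,
            show (1 / 4 : ℝ) = (1 / 2) ^ 2 by norm_num, ← pow_mul, mul_comm 2 j, pow_mul]
          ring
  have hsum := hasSum_integral hsupp hinv (f := fun x => x ^ 2) (continuous_pow 2)
  simp only [hterm] at hsum
  have hrhs := ((((hasSum_p_mul_pow (r := 1 / 4) (by norm_num)).mul_left (m / 16 + 5 / 7)).sub
    ((hasSum_p_mul_pow (r := 1 / 2) (by norm_num)).mul_left (12 / 7))).add
    (hasSum_p_mul_pow (r := 1) (by norm_num))).congr_fun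
    (g := fun j => p (j + 1) * ((m / 16 + 5 / 7) * (1 / 4) ^ j - 12 / 7 * (1 / 2) ^ j + 1))
    fun j => by ring
  have := hsum.unique hrhs
  norm_num at this
  linarith

lemma integral_sub_sq (hsupp : P (Icc 0 1) = 1) (hinv : Invariant P)
    (a : ℝ) : ∫ x, (x - a) ^ 2 ∂P = 288 / 3577 + (a - 4 / 7) ^ 2 := by
  calc ∫ x, (x - a) ^ 2 ∂P = ∫ x, (1 * x ^ 2 + (-2 * a) * x + a ^ 2) ∂P := by
        congr 1 with x; ring
    _ = _ := by
        rw [integral_quadratic hsupp, integral_sq_eq hsupp hinv, integral_id_eq hsupp hinv]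
        ring

lemma measure_eq_zero_of_forall_S_notMem (hsupp : P (Icc 0 1) = 1) (hinv : Invariant P) {A : Set ℝ}
    (hA : MeasurableSet A)
    (h : ∀ j, ∀ x ∈ Icc (0 : ℝ) 1, S (j + 1) x ∉ A) : P A = 0 := by
  rw [hinv A hA]
  simp [measure_preimage_S_eq_zero hsupp (h _)]

lemma restrict_eq_smul_map (hsupp : P (Icc 0 1) = 1) (hinv : Invariant P) (k : ℕ) {T : Set ℝ}
    (hT : MeasurableSet T)
    (hin : ∀ x ∈ Icc (0 : ℝ) 1, S (k + 1) x ∈ T)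
    (hout : ∀ j ≠ k, ∀ x ∈ Icc (0 : ℝ) 1, S (j + 1) x ∉ T) :
    P.restrict T = ENNReal.ofReal (p (k + 1)) • P.map (S (k + 1)) := by
  ext B hB
  rw [Measure.restrict_apply hB, Measure.smul_apply,
    Measure.map_apply (continuous_S _).measurable hB, smul_eq_mul, hinv _ (hB.inter hT),
    tsum_eq_single k fun j hj => ?_]
  · rw [preimage_inter]
    exact congrArg _ (measure_inter_conull (measure_mono_null (fun x hx hx' => hx (hin x hx'))
      (ae_mem_Icc hsupp)))
  · rw [measure_preimage_S_eq_zero hsupp fun x hx hxT => hout j hj x hx hxT.2, mul_zero]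

lemma setIntegral_eq_integral_comp_S (hsupp : P (Icc 0 1) = 1) (hinv : Invariant P) (k : ℕ)
    {T : Set ℝ} (hT : MeasurableSet T)
    (hin : ∀ x ∈ Icc (0 : ℝ) 1, S (k + 1) x ∈ T)
    (hout : ∀ j ≠ k, ∀ x ∈ Icc (0 : ℝ) 1, S (j + 1) x ∉ T) {f : ℝ → ℝ} (hf : Continuous f) :
    ∫ x in T, f x ∂P = p (k + 1) * ∫ x, f (S (k + 1) x) ∂P := by
  rw [restrict_eq_smul_map hsupp hinv k hT hin hout, integral_smul_measure,
    integral_map (continuous_S _).aemeasurable hf.aestronglyMeasurable,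
    ENNReal.toReal_ofReal (p_succ_nonneg k), smul_eq_mul]

lemma setIntegral_Icc_zero_quarter (hsupp : P (Icc 0 1) = 1) (hinv : Invariant P) {f : ℝ → ℝ}
    (hf : Continuous f) :
    ∫ x in Icc 0 (1 / 4), f x ∂P = 1 / 4 * ∫ x, f (x / 4) ∂P := by
  rw [setIntegral_eq_integral_comp_S hsupp hinv 0 measurableSet_Icc (fun x => S_one_mem) ?_ hf]
  · norm_num [S, p]
  · rintro (_ | _ | j) hj x hx hxT
    · exact hj rfl
    · linarith [(S_two_mem hx).1, hxT.2]
    · linarith [(S_mem_of_three_le (k := j + 1 + 1 + 1) (by omega) hx).1, hxT.2]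

lemma setIntegral_Icc_half_fiveEighths (hsupp : P (Icc 0 1) = 1) (hinv : Invariant P) {f : ℝ → ℝ}
    (hf : Continuous f) :
    ∫ x in Icc (1 / 2) (5 / 8), f x ∂P = 3 / 8 * ∫ x, f (x / 8 + 1 / 2) ∂P := by
  rw [setIntegral_eq_integral_comp_S hsupp hinv 1 measurableSet_Icc (fun x => S_two_mem) ?_ hf]
  · norm_num [S, p]
    congr 1 with x
    ring_nf
  · rintro (_ | _ | j) hj x hx hxT
    · linarith [(S_one_mem hx).2, hxT.1]
    · exact hj rfl
    · linarith [(S_mem_of_three_le (k := j + 1 + 1 + 1) (by omega) hx).1, hxT.2]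

lemma measure_Ioo_quarter_half (hsupp : P (Icc 0 1) = 1) (hinv : Invariant P) : P
    (Ioo (1 / 4) (1 / 2)) = 0 := by
  refine measure_eq_zero_of_forall_S_notMem hsupp hinv measurableSet_Ioo ?_
  rintro (_ | _ | j) x hx hxT
  · linarith [(S_one_mem hx).2, hxT.1]
  · linarith [(S_two_mem hx).1, hxT.2]
  · linarith [(S_mem_of_three_le (k := j + 1 + 1 + 1) (by omega) hx).1, hxT.2]

lemma measure_Ioo_fiveEighths_threeQuarters (hsupp : P (Icc 0 1) = 1) (hinv : Invariant P) : P
    (Ioo (5 / 8) (3 / 4)) = 0 := by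
  refine measure_eq_zero_of_forall_S_notMem hsupp hinv measurableSet_Ioo ?_
  rintro (_ | _ | j) x hx hxT
  · linarith [(S_one_mem hx).2, hxT.1]
  · linarith [(S_two_mem hx).2, hxT.1]
  · linarith [(S_mem_of_three_le (k := j + 1 + 1 + 1) (by omega) hx).1, hxT.2]

lemma integral_eq_setIntegral_add_add (hsupp : P (Icc 0 1) = 1) (hinv : Invariant P) {f : ℝ → ℝ}
    (hf : Integrable f P) :
    ∫ x, f x ∂P = ∫ x in Icc 0 (1 / 4), f x ∂P + ∫ x in Icc (1 / 2) (5 / 8), f x ∂P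
      + ∫ x in Icc (3 / 4) 1, f x ∂P := by
  have hP : ∫ x, f x ∂P = ∫ x in Icc 0 1, f x ∂P := by
    rw [Measure.restrict_eq_self_of_ae_mem (ae_mem_Icc hsupp)]
  rw [hP, setIntegral_Icc_eq_add_of_measure_Ioo_eq_zero (b := 1 / 4) (c := 1 / 2) (by norm_num)
      (by norm_num) (by norm_num) (measure_Ioo_quarter_half hsupp hinv) hf,
    setIntegral_Icc_eq_add_of_measure_Ioo_eq_zero (a := 1 / 2) (b := 5 / 8) (c := 3 / 4) (d := 1)
      (by norm_num) (by norm_num) (by norm_num) (measure_Ioo_fiveEighths_threeQuarters hsupp hinv)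
      hf, add_assoc]

lemma setIntegral_Icc_zero_quarter_min_sq (hsupp : P (Icc 0 1) = 1) (hinv : Invariant P) (a b : ℝ) :
    ∫ x in Icc 0 (1 / 4), min ((x - a) ^ 2) ((x - b) ^ 2) ∂P
      = 1 / 64 * distortion P {4 * a, 4 * b} := by
  rw [setIntegral_Icc_zero_quarter hsupp hinv (by fun_prop), distortion_pair,
    ← integral_const_mul, ← integral_const_mul]
  congr 1 with x
  rw [mul_min_of_nonneg _ _ (by norm_num), mul_min_of_nonneg _ _ (by norm_num)]
  ring_nf

lemma setIntegral_Icc_half_fiveEighths_min_sq (hsupp : P (Icc 0 1) = 1)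
    (hinv : Invariant P) (a b : ℝ) :
    ∫ x in Icc (1 / 2) (5 / 8), min ((x - a) ^ 2) ((x - b) ^ 2) ∂P
      = 3 / 512 * distortion P {8 * a - 4, 8 * b - 4} := by
  rw [setIntegral_Icc_half_fiveEighths hsupp hinv (by fun_prop), distortion_pair,
    ← integral_const_mul, ← integral_const_mul]
  congr 1 with x
  rw [mul_min_of_nonneg _ _ (by norm_num), mul_min_of_nonneg _ _ (by norm_num)]
  ring_nf

lemma distortion_pair_eq_add (hsupp : P (Icc 0 1) = 1) (hinv : Invariant P) (a b : ℝ) :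
    distortion P {a, b} = 1 / 64 * distortion P {4 * a, 4 * b}
      + 3 / 512 * distortion P {8 * a - 4, 8 * b - 4}
      + ∫ x in Icc (3 / 4) 1, min ((x - a) ^ 2) ((x - b) ^ 2) ∂P := by
  rw [distortion_pair, integral_eq_setIntegral_add_add hsupp hinv
    (integrable_of_continuous hsupp (by fun_prop)), setIntegral_Icc_zero_quarter_min_sq hsupp hinv,
    setIntegral_Icc_half_fiveEighths_min_sq hsupp hinv]

lemma distortion_pair_of_two_le_add (hsupp : P (Icc 0 1) = 1) (hinv : Invariant P) {a b : ℝ}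
    (hab : a ≤ b) (h : 2 ≤ a + b) :
    distortion P {a, b} = 288 / 3577 + (a - 4 / 7) ^ 2 := by
  rw [distortion_pair, ← integral_sub_sq hsupp hinv]
  refine integral_congr_ae ?_
  filter_upwards [ae_mem_Icc hsupp] with x hx
  exact min_sq_sub_eq_left hab (by linarith [hx.2])

lemma distortion_pair_of_add_nonpos (hsupp : P (Icc 0 1) = 1) (hinv : Invariant P) {a b : ℝ}
    (hab : a ≤ b) (h : a + b ≤ 0) :
    distortion P {a, b} = 288 / 3577 + (b - 4 / 7) ^ 2 := by
  rw [distortion_pair, ← integral_sub_sq hsupp hinv]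
  refine integral_congr_ae ?_
  filter_upwards [ae_mem_Icc hsupp] with x hx
  exact min_sq_sub_eq_right hab (by linarith [hx.1])

lemma setIntegral_Icc_threeQuarters_one_sub_sq (hsupp : P (Icc 0 1) = 1)
    (hinv : Invariant P) (b : ℝ) :
    ∫ x in Icc (3 / 4) 1, (x - b) ^ 2 ∂P = 129 / 57232 + 3 / 8 * (b - 6 / 7) ^ 2 := by
  have h := distortion_pair_eq_add hsupp hinv b b
  simp only [pair_eq_singleton, distortion_singleton, integral_sub_sq hsupp hinv, min_self] at h
  linear_combination -h

lemma setIntegral_Icc_threeQuarters_one_min_sq (hsupp : P (Icc 0 1) = 1)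
    (hinv : Invariant P) {a b : ℝ} (hab : a ≤ b) (h : a + b ≤ 3 / 2) :
    ∫ x in Icc (3 / 4) 1, min ((x - a) ^ 2) ((x - b) ^ 2) ∂P
      = 129 / 57232 + 3 / 8 * (b - 6 / 7) ^ 2 := by
  rw [← setIntegral_Icc_threeQuarters_one_sub_sq hsupp hinv]
  exact setIntegral_congr_fun measurableSet_Icc fun x hx =>
    min_sq_sub_eq_right hab (by linarith [hx.1])

lemma distortion_pair_of_add_le_one (hsupp : P (Icc 0 1) = 1) (hinv : Invariant P) {a b : ℝ}
    (hab : a ≤ b) (h : a + b ≤ 1) :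
    distortion P {a, b} = 1 / 64 * distortion P {4 * a, 4 * b} + 129 / 7154
      + 3 / 4 * (b - 5 / 7) ^ 2 := by
  rw [distortion_pair_eq_add hsupp hinv,
    distortion_pair_of_add_nonpos hsupp hinv (a := 8 * a - 4) (b := 8 * b - 4) (by linarith)
      (by linarith),
    setIntegral_Icc_threeQuarters_one_min_sq hsupp hinv hab (by linarith)]
  ring

lemma distortion_pair_of_half_le_add (hsupp : P (Icc 0 1) = 1) (hinv : Invariant P) {a b : ℝ}
    (hab : a ≤ b) (h : 1 / 2 ≤ a + b) :
    distortion P {a, b} = 9 / 7154 + 1 / 4 * (a - 1 / 7) ^ 2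
      + 3 / 512 * distortion P {8 * a - 4, 8 * b - 4}
      + ∫ x in Icc (3 / 4) 1, min ((x - a) ^ 2) ((x - b) ^ 2) ∂P := by
  rw [distortion_pair_eq_add hsupp hinv,
    distortion_pair_of_two_le_add hsupp hinv (a := 4 * a) (b := 4 * b) (by linarith) (by linarith)]
  ring

lemma distortion_pair_of_add_mem_Icc (hsupp : P (Icc 0 1) = 1) (hinv : Invariant P) {a b : ℝ}
    (hab : a ≤ b) (h₁ : 1 / 2 ≤ a + b) (h₂ : a + b ≤ 1) :
    distortion P {a, b} = 69 / 3577 + 1 / 4 * (a - 1 / 7) ^ 2 + 3 / 4 * (b - 5 / 7) ^ 2 := by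
  rw [distortion_pair_of_add_le_one hsupp hinv hab h₂,
    distortion_pair_of_two_le_add hsupp hinv (a := 4 * a) (b := 4 * b) (by linarith) (by linarith)]
  ring

lemma lt_distortion_pair_of_add_lt_half (hsupp : P (Icc 0 1) = 1) (hinv : Invariant P) {a b : ℝ}
    (hab : a < b) (h : a + b < 1 / 2) :
    69 / 3577 < distortion P {a, b} ∨
      63 / 64 * (69 / 3577) + 1 / 64 * quantErr P 2 < distortion P {a, b} := by
  rw [distortion_pair_of_add_le_one hsupp hinv hab.le (by linarith)]
  by_cases hb : 19 / 28 ≤ b ∧ b ≤ 3 / 4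
  · have hD := min_le_distortion_pair hsupp (a := 4 * a) (b := 4 * b) (by linarith) (by linarith)
    have hmin : 25 / 49 ≤ min ((4 * a) ^ 2) ((4 * b - 1) ^ 2) :=
      le_min (by nlinarith) (by nlinarith)
    left
    nlinarith [sq_nonneg (b - 5 / 7)]
  · have hV := quantErr_two_le_distortion_pair (P := P) (a := 4 * a) (b := 4 * b) (by linarith)
    -- `3/3136 = 63/64 · 69/3577 - 129/7154`, attained at `b = 5/7 ± 1/28`
    have hfar : 3 / 3136 < 3 / 4 * (b - 5 / 7) ^ 2 := by
      rcases not_and_or.mp hb with hb | hb <;> nlinarith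
    right
    linarith

lemma lt_distortion_pair_of_one_lt_add_of_lt_two_fifths (hsupp : P (Icc 0 1) = 1)
    (hinv : Invariant P) {a b : ℝ} (ha : a < 2 / 5) (h₁ : 1 < a + b) (h₂ : a + b < 5 / 4) :
    69 / 3577 < distortion P {a, b} := by
  rw [distortion_pair_of_half_le_add hsupp hinv (by linarith) (by linarith),
    setIntegral_Icc_threeQuarters_one_min_sq hsupp hinv (by linarith) (by linarith)]
  have hab' : 8 * a - 4 ≤ 8 * b - 4 := by linarith
  -- `a + b = 17/16` and `a + b = 9/8` are where `(8a - 4) + (8b - 4)` crosses `1/2` and `1`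
  rcases lt_or_ge (a + b) (17 / 16) with h₃ | h₃
  · rw [distortion_pair_of_add_le_one hsupp hinv hab' (by linarith)]
    have hD := min_le_distortion_pair hsupp (P := P) (a := 4 * (8 * a - 4)) (b := 4 * (8 * b - 4))
      (by linarith) (by linarith)
    rcases min_cases ((4 * (8 * a - 4)) ^ 2) ((4 * (8 * b - 4) - 1) ^ 2) with ⟨hm, -⟩ | ⟨hm, -⟩ <;>
      rw [hm] at hD
    · nlinarith [sq_nonneg (a + b - 1), sq_nonneg (b - 752 / 1000), sq_nonneg (a - 1 / 4),
        mul_nonneg (by linarith : (0 : ℝ) ≤ a + b - 1) (by linarith : (0 : ℝ) ≤ b - 3 / 5)]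
    · nlinarith [sq_nonneg (a + b - 1), sq_nonneg (b - 76 / 100), sq_nonneg (a - 24 / 100),
        mul_nonneg (by linarith : (0 : ℝ) ≤ a + b - 1) (by linarith : (0 : ℝ) ≤ b - 3 / 5)]
  rcases le_or_gt (a + b) (9 / 8) with h₄ | h₄
  · rw [distortion_pair_of_add_mem_Icc hsupp hinv hab' (by linarith) (by linarith)]
    nlinarith [sq_nonneg (a + b - 17 / 16), sq_nonneg (b - 768 / 1000), sq_nonneg (a - 294 / 1000)]
  · rw [distortion_pair_of_half_le_add hsupp hinv hab' (by linarith)]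
    have hD := min_le_distortion_pair hsupp (P := P) (a := 8 * (8 * a - 4) - 4)
      (b := 8 * (8 * b - 4) - 4) (by linarith) (by linarith)
    have hK : 0 ≤ ∫ x in Icc (3 / 4) 1, min ((x - (8 * a - 4)) ^ 2) ((x - (8 * b - 4)) ^ 2) ∂P :=
      setIntegral_nonneg measurableSet_Icc fun x _ => le_min (sq_nonneg _) (sq_nonneg _)
    rcases min_cases ((8 * (8 * a - 4) - 4) ^ 2) ((8 * (8 * b - 4) - 4 - 1) ^ 2)
      with ⟨hm, -⟩ | ⟨hm, -⟩ <;> rw [hm] at hD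
    · nlinarith [sq_nonneg (a + b - 9 / 8), sq_nonneg (b - 6 / 7), sq_nonneg (a - 388 / 1000)]
    · nlinarith [sq_nonneg (a + b - 9 / 8), sq_nonneg (b - 7997 / 10000),
        sq_nonneg (a - 3253 / 10000)]

lemma lt_distortion_pair_of_one_lt_add (hsupp : P (Icc 0 1) = 1) (hinv : Invariant P) {a b : ℝ}
    (hab : a < b) (h : 1 < a + b) :
    69 / 3577 < distortion P {a, b} := by
  rcases le_or_gt (5 / 4) (a + b) with h₁ | h₁
  · rw [distortion_pair_of_half_le_add hsupp hinv hab.le (by linarith),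
      distortion_pair_of_two_le_add hsupp hinv (a := 8 * a - 4) (b := 8 * b - 4) (by linarith)
        (by linarith)]
    have hK : 0 ≤ ∫ x in Icc (3 / 4) 1, min ((x - a) ^ 2) ((x - b) ^ 2) ∂P :=
      setIntegral_nonneg measurableSet_Icc fun x _ => le_min (sq_nonneg _) (sq_nonneg _)
    nlinarith [sq_nonneg (a - 2 / 5)]
  rcases lt_or_ge a (2 / 5) with ha | ha
  · exact lt_distortion_pair_of_one_lt_add_of_lt_two_fifths hsupp hinv ha h h₁
  rw [distortion_pair_of_half_le_add hsupp hinv hab.le (by linarith),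
    setIntegral_Icc_threeQuarters_one_min_sq hsupp hinv hab.le (by linarith)]
  have hD := distortion_nonneg P {8 * a - 4, 8 * b - 4}
  nlinarith [sq_nonneg (b - 6 / 7),
    mul_nonneg (by linarith : (0 : ℝ) ≤ a - 2 / 5) (by linarith : (0 : ℝ) ≤ a - 2 / 5 + 18 / 35)]

lemma distortion_one_seventh_five_sevenths (hsupp : P (Icc 0 1) = 1) (hinv : Invariant P) :
    distortion P {1 / 7, 5 / 7} = 69 / 3577 := by
  rw [distortion_pair_of_add_mem_Icc hsupp hinv (by norm_num) (by norm_num) (by norm_num)]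
  norm_num

lemma lt_distortion_of_ne (hsupp : P (Icc 0 1) = 1) (hinv : Invariant P) {α : Set ℝ}
    (h₁ : 1 ≤ α.ncard) (h₂ : α.ncard ≤ 2) (hα : α ≠ {1 / 7, 5 / 7}) :
    69 / 3577 < distortion P α ∨
      63 / 64 * (69 / 3577) + 1 / 64 * quantErr P 2 < distortion P α := by
  interval_cases hcard : α.ncard
  · obtain ⟨c, rfl⟩ := ncard_eq_one.mp hcard
    left
    rw [distortion_singleton, integral_sub_sq hsupp hinv]
    nlinarith [sq_nonneg (c - 4 / 7)]
  obtain ⟨a, b, hne, rfl⟩ := ncard_eq_two.mp hcard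
  wlog hab : a < b generalizing a b
  · rw [pair_comm] at hα ⊢
    exact this b a hne.symm hα (ncard_pair hne.symm) (hne.lt_or_gt.resolve_left hab)
  rcases lt_or_ge (a + b) (1 / 2) with hs | hs
  · exact lt_distortion_pair_of_add_lt_half hsupp hinv hab hs
  rcases le_or_gt (a + b) 1 with hs' | hs'
  · have hoff : a - 1 / 7 ≠ 0 ∨ b - 5 / 7 ≠ 0 := by
      by_contra! h
      exact hα (by rw [sub_eq_zero.mp h.1, sub_eq_zero.mp h.2])
    left
    rw [distortion_pair_of_add_mem_Icc hsupp hinv hab.le hs hs']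
    rcases hoff with h | h <;>
      nlinarith [sq_pos_of_ne_zero h, sq_nonneg (a - 1 / 7), sq_nonneg (b - 5 / 7)]
  · exact .inl (lt_distortion_pair_of_one_lt_add hsupp hinv hab hs')

lemma quantErr_two_eq (hsupp : P (Icc 0 1) = 1) (hinv : Invariant P) :
    quantErr P 2 = 69 / 3577 := by
  have hopt := distortion_one_seventh_five_sevenths hsupp hinv
  have hle : quantErr P 2 ≤ 69 / 3577 := hopt ▸ quantErr_two_le_distortion_pair (by norm_num)
  by_contra hne
  have hlt := lt_of_le_of_ne hle hne
  have hge : 63 / 64 * (69 / 3577) + 1 / 64 * quantErr P 2 ≤ quantErr P 2 :=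
    le_quantErr one_le_two fun α h₁ h₂ => by
      by_cases hα : α = {1 / 7, 5 / 7}
      · rw [hα, hopt]; linarith
      · rcases lt_distortion_of_ne hsupp hinv h₁ h₂ hα with h | h <;> linarith
  linarith

end Invariant

/-- `{1/7, 5/7}` is the unique optimal set of two-means for `P`, and `V₂ = 69/3577`. -/
theorem stmt_5 (P : Measure ℝ) [IsProbabilityMeasure P]
    (hsupp : P (Set.Icc 0 1) = 1) (hinv : Invariant P) :
    IsOptimal P 2 ({1 / 7, 5 / 7} : Set ℝ) ∧
    (∀ α : Set ℝ, IsOptimal P 2 α → α = ({1 / 7, 5 / 7} : Set ℝ)) ∧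
    quantErr P 2 = 69 / 3577 := by
  have hQ := Invariant.quantErr_two_eq hsupp hinv
  have hopt := Invariant.distortion_one_seventh_five_sevenths hsupp hinv
  have hcard : ({1 / 7, 5 / 7} : Set ℝ).ncard = 2 := ncard_pair (by norm_num)
  refine ⟨⟨by omega, hcard.le, by rw [hopt, hQ]⟩, fun α ⟨h₁, h₂, hα⟩ => ?_, hQ⟩
  by_contra hne
  rcases Invariant.lt_distortion_of_ne hsupp hinv h₁ h₂ hne with h | h <;>
    rw [hα, hQ] at h <;> linarith
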